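/- Let V be a finite-dimensional complex inner product space, ξ a self-adjoint endomorphism of V, and b any endomorphism of V. Then for every t ∈ [0,1], the Hilbert–Schmidt norms satisfy ‖exp(tξ) ∘ b ∘ exp(−tξ)‖² ≤ ‖b‖² + ‖exp(ξ) ∘ b ∘ exp(−ξ)‖². In particular, if r > 0 and both b and exp(ξ) ∘ b ∘ exp(−ξ) have norm at most r/√2, then ‖exp(tξ) ∘ b ∘ exp(−tξ)‖ ≤ r for every t ∈ [0,1]. -/

import Mathlib

open scoped Topology

open scoped InnerProductSpace in
theorem aux_parseval {V : Type*} [NormedAddCommGroup V] [InnerProductSpace ℂ V]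
    {n : ℕ} (e : OrthonormalBasis (Fin n) ℂ V) (x : V) :
    ‖x‖^2 = ∑ j, ‖⟪e j, x⟫_ℂ‖^2 := by
  have h := e.sum_inner_mul_inner x x
  have h2 : ∀ j, ⟪x, e j⟫_ℂ * ⟪e j, x⟫_ℂ = ((‖⟪e j, x⟫_ℂ‖^2 : ℝ) : ℂ) := by
    intro j
    rw [show ⟪x, e j⟫_ℂ = starRingEnd ℂ ⟪e j, x⟫_ℂ from (inner_conj_symm _ _).symm,
      mul_comm, Complex.mul_conj, Complex.normSq_eq_norm_sq]
  simp_rw [h2, inner_self_eq_norm_sq_to_K] at h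
  have h3 := congrArg Complex.re h
  push_cast at h3
  simpa [← Complex.ofReal_pow] using h3.symm

theorem aux_exp_apply_eigen {V : Type*} [NormedAddCommGroup V] [InnerProductSpace ℂ V]
    [FiniteDimensional ℂ V] (A : V →L[ℂ] V) (v : V) (c : ℂ) (h : A v = c • v) :
    NormedSpace.exp A v = Complex.exp c • v := by
  have hpow : ∀ n : ℕ, (A ^ n) v = c ^ n • v := by
    intro n; induction n with
    | zero => simp
    | succ n ih =>
      rw [pow_succ, pow_succ]
      simp [ContinuousLinearMap.mul_apply, ih, h, smul_smul, mul_comm]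
  have hs : Summable fun n : ℕ => (n.factorial : ℂ)⁻¹ • A ^ n :=
    NormedSpace.expSeries_summable' A
  have hmap := (ContinuousLinearMap.apply ℂ V v).map_tsum hs
  rw [NormedSpace.exp_eq_tsum ℂ]
  rw [show ((∑' n : ℕ, ((n.factorial : ℂ))⁻¹ • A ^ n) v)
      = ∑' n : ℕ, ((n.factorial : ℂ)⁻¹ • ((A ^ n) v)) from by simpa using hmap]
  simp_rw [hpow, smul_smul]
  rw [show Complex.exp c = NormedSpace.exp c from by rw [Complex.exp_eq_exp_ℂ],
    NormedSpace.exp_eq_tsum ℂ, ← Summable.tsum_smul_const (NormedSpace.expSeries_summable' c)]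
  simp_rw [smul_eq_mul]

open scoped InnerProductSpace in
theorem aux_trace_onb {V : Type*} [NormedAddCommGroup V] [InnerProductSpace ℂ V]
    [FiniteDimensional ℂ V] {n : ℕ} (e : OrthonormalBasis (Fin n) ℂ V) (f : V →ₗ[ℂ] V) :
    LinearMap.trace ℂ V f = ∑ i, ⟪e i, f (e i)⟫_ℂ := by
  rw [LinearMap.trace_eq_matrix_trace ℂ e.toBasis f, Matrix.trace]
  congr 1
  ext i
  rw [Matrix.diag_apply, LinearMap.toMatrix_apply, OrthonormalBasis.coe_toBasis,
    OrthonormalBasis.coe_toBasis_repr_apply, OrthonormalBasis.repr_apply_apply]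

variable {V : Type*} [NormedAddCommGroup V] [InnerProductSpace ℂ V] [FiniteDimensional ℂ V]

/-- The Hilbert–Schmidt norm `‖b‖ = √(tr (b ∘ b*))` on endomorphisms of a
finite-dimensional complex inner product space. -/
noncomputable def hsNorm (b : V →L[ℂ] V) : ℝ :=
  Real.sqrt (LinearMap.trace ℂ V
    ((b ∘L ContinuousLinearMap.adjoint b : V →L[ℂ] V) : V →ₗ[ℂ] V)).re

/-- The orthogonal projection onto the eigenspace `ker (ξ - λ·id)`, regarded as an
endomorphism of `V`. -/
noncomputable def eigProj (ξ : V →L[ℂ] V) (lam : ℝ) : V →L[ℂ] V :=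
  (Module.End.eigenspace (ξ : V →ₗ[ℂ] V) (lam : ℂ)).subtypeL ∘L
    (Module.End.eigenspace (ξ : V →ₗ[ℂ] V) (lam : ℂ)).orthogonalProjectionOnto

open scoped InnerProductSpace in
theorem aux_hsNorm_sq {n : ℕ} (e : OrthonormalBasis (Fin n) ℂ V) (c : V →L[ℂ] V) :
    hsNorm c ^ 2 = ∑ i, ∑ j, ‖⟪e j, ContinuousLinearMap.adjoint c (e i)⟫_ℂ‖^2 := by
  have htr : (LinearMap.trace ℂ V
      ((c ∘L ContinuousLinearMap.adjoint c : V →L[ℂ] V) : V →ₗ[ℂ] V)).re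
      = ∑ i, ‖ContinuousLinearMap.adjoint c (e i)‖^2 := by
    rw [aux_trace_onb e]
    simp only [ContinuousLinearMap.coe_coe]
    have : ∀ i : Fin n, ⟪e i, (c ∘L ContinuousLinearMap.adjoint c : V →L[ℂ] V) (e i)⟫_ℂ
        = ((‖ContinuousLinearMap.adjoint c (e i)‖^2 : ℝ) : ℂ) := by
      intro i
      rw [ContinuousLinearMap.coe_comp', Function.comp_apply,
        ← ContinuousLinearMap.adjoint_inner_left c, inner_self_eq_norm_sq_to_K]
      norm_cast
    simp_rw [this]
    norm_cast
  rw [hsNorm, htr, Real.sq_sqrt (by positivity)]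
  exact Finset.sum_congr rfl fun i _ => aux_parseval e _

/-- eigenbasis of a self-adjoint endomorphism -/
noncomputable def eBasis (ξ : V →L[ℂ] V) (hξ : IsSelfAdjoint ξ) :
    OrthonormalBasis (Fin (Module.finrank ℂ V)) ℂ V :=
  hξ.isSymmetric.eigenvectorBasis rfl

noncomputable def eVal (ξ : V →L[ℂ] V) (hξ : IsSelfAdjoint ξ) :
    Fin (Module.finrank ℂ V) → ℝ :=
  hξ.isSymmetric.eigenvalues rfl

theorem aux_smul_selfAdjoint (ξ : V →L[ℂ] V) (hξ : IsSelfAdjoint ξ) (s : ℝ) :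
    IsSelfAdjoint (s • ξ) := by
  have : star ((s:ℂ) • ξ) = (s:ℂ) • ξ := by
    rw [star_smul, Complex.star_def, Complex.conj_ofReal, hξ.star_eq]
  rw [RCLike.real_smul_eq_coe_smul (K := ℂ)]
  exact this

theorem aux_exp_smul_apply (ξ : V →L[ℂ] V) (hξ : IsSelfAdjoint ξ) (s : ℝ)
    (i : Fin (Module.finrank ℂ V)) :
    NormedSpace.exp (s • ξ) (eBasis ξ hξ i)
      = ((Real.exp (s * eVal ξ hξ i) : ℝ) : ℂ) • eBasis ξ hξ i := by
  have heig : ξ (eBasis ξ hξ i) = ((eVal ξ hξ i : ℝ) : ℂ) • eBasis ξ hξ i :=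
    hξ.isSymmetric.apply_eigenvectorBasis rfl i
  have h : (s • ξ) (eBasis ξ hξ i) = ((s * eVal ξ hξ i : ℝ) : ℂ) • eBasis ξ hξ i := by
    rw [ContinuousLinearMap.smul_apply, heig,
      RCLike.real_smul_eq_coe_smul (K := ℂ), smul_smul]
    push_cast
    simp [mul_comm]
  rw [aux_exp_apply_eigen _ _ _ h, ← Complex.ofReal_exp]

open scoped InnerProductSpace in
theorem aux_key (ξ : V →L[ℂ] V) (hξ : IsSelfAdjoint ξ) (b : V →L[ℂ] V) (t : ℝ) :
    hsNorm (NormedSpace.exp (t • ξ) ∘L b ∘L NormedSpace.exp (-(t • ξ))) ^ 2 =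
      ∑ i, ∑ j, Real.exp (2 * t * (eVal ξ hξ i - eVal ξ hξ j)) *
        ‖⟪eBasis ξ hξ j, ContinuousLinearMap.adjoint b (eBasis ξ hξ i)⟫_ℂ‖^2 := by
  set e := eBasis ξ hξ
  set μ := eVal ξ hξ
  have hneg : -(t • ξ) = (-t) • ξ := (neg_smul t ξ).symm
  have hsaE : IsSelfAdjoint (NormedSpace.exp (t • ξ)) :=
    (aux_smul_selfAdjoint ξ hξ t).exp
  have hsaE' : IsSelfAdjoint (NormedSpace.exp ((-t) • ξ)) :=
    (aux_smul_selfAdjoint ξ hξ (-t)).exp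
  rw [hneg, aux_hsNorm_sq e]
  refine Finset.sum_congr rfl fun i _ => Finset.sum_congr rfl fun j _ => ?_
  rw [ContinuousLinearMap.adjoint_comp, ContinuousLinearMap.adjoint_comp,
    hsaE.adjoint_eq, hsaE'.adjoint_eq]
  rw [ContinuousLinearMap.comp_apply, ContinuousLinearMap.comp_apply,
    aux_exp_smul_apply ξ hξ t i, map_smul, map_smul, inner_smul_right]
  rw [show (⟪e j, (NormedSpace.exp ((-t) • ξ)) ((ContinuousLinearMap.adjoint b) (e i))⟫_ℂ)
      = ⟪(NormedSpace.exp ((-t) • ξ)) (e j), (ContinuousLinearMap.adjoint b) (e i)⟫_ℂ from by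
    rw [← hsaE'.adjoint_eq, ContinuousLinearMap.adjoint_inner_right, hsaE'.adjoint_eq]]
  rw [aux_exp_smul_apply ξ hξ (-t) j, inner_smul_left, Complex.conj_ofReal]
  rw [norm_mul, norm_mul, Complex.norm_real, Complex.norm_real,
    Real.norm_eq_abs, Real.norm_eq_abs, Real.abs_exp, Real.abs_exp, mul_pow, mul_pow]
  rw [show Real.exp (2 * t * (μ i - μ j))
      = Real.exp (t * μ i) ^ 2 * Real.exp (-t * μ j) ^ 2 from by
    rw [sq, sq, ← Real.exp_add, ← Real.exp_add, ← Real.exp_add]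
    ring_nf]
  ring

theorem hsNorm_exp_conj_le (ξ : V →L[ℂ] V) (hξ : IsSelfAdjoint ξ) (b : V →L[ℂ] V) :
    (∀ t ∈ Set.Icc (0:ℝ) 1,
      hsNorm (NormedSpace.exp (t • ξ) ∘L b ∘L NormedSpace.exp (-(t • ξ))) ^ 2 ≤
        hsNorm b ^ 2 + hsNorm (NormedSpace.exp ξ ∘L b ∘L NormedSpace.exp (-ξ)) ^ 2) ∧
    ∀ r : ℝ, 0 < r →
      hsNorm b ≤ r / Real.sqrt 2 →
      hsNorm (NormedSpace.exp ξ ∘L b ∘L NormedSpace.exp (-ξ)) ≤ r / Real.sqrt 2 →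
      ∀ t ∈ Set.Icc (0:ℝ) 1,
        hsNorm (NormedSpace.exp (t • ξ) ∘L b ∘L NormedSpace.exp (-(t • ξ))) ≤ r := by
  have k0 := aux_key ξ hξ b 0
  simp only [zero_smul, neg_zero, NormedSpace.exp_zero, mul_zero, zero_mul, Real.exp_zero,
    one_mul, ContinuousLinearMap.comp_id, ContinuousLinearMap.id_comp, ContinuousLinearMap.one_def] at k0
  have k1 := aux_key ξ hξ b 1
  rw [one_smul] at k1
  have part1 : ∀ t ∈ Set.Icc (0:ℝ) 1,
      hsNorm (NormedSpace.exp (t • ξ) ∘L b ∘L NormedSpace.exp (-(t • ξ))) ^ 2 ≤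
        hsNorm b ^ 2 + hsNorm (NormedSpace.exp ξ ∘L b ∘L NormedSpace.exp (-ξ)) ^ 2 := by
    intro t ht
    rw [aux_key ξ hξ b t, k0, k1, ← Finset.sum_add_distrib]
    refine Finset.sum_le_sum fun i _ => ?_
    rw [← Finset.sum_add_distrib]
    refine Finset.sum_le_sum fun j _ => ?_
    have hbound : Real.exp (2 * t * (eVal ξ hξ i - eVal ξ hξ j))
        ≤ 1 + Real.exp (2 * 1 * (eVal ξ hξ i - eVal ξ hξ j)) := by
      set a := eVal ξ hξ i - eVal ξ hξ j
      rcases le_or_gt 0 a with ha | ha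
      · have : Real.exp (2 * t * a) ≤ Real.exp (2 * 1 * a) :=
          Real.exp_le_exp.2 (by nlinarith [ht.1, ht.2])
        linarith
      · have : Real.exp (2 * t * a) ≤ 1 := by
          rw [← Real.exp_zero]
          exact Real.exp_le_exp.2 (by nlinarith [ht.1, ht.2])
        have := Real.exp_pos (2 * 1 * a)
        linarith
    have hm : (0:ℝ) ≤ ‖(inner ℂ (eBasis ξ hξ j)
        (ContinuousLinearMap.adjoint b (eBasis ξ hξ i)) : ℂ)‖^2 := by positivity
    nlinarith [mul_le_mul_of_nonneg_right hbound hm]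
  refine ⟨part1, fun r hr hb he t ht => ?_⟩
  have hX : 0 ≤ hsNorm (NormedSpace.exp (t • ξ) ∘L b ∘L NormedSpace.exp (-(t • ξ))) :=
    Real.sqrt_nonneg _
  have hb0 : 0 ≤ hsNorm b := Real.sqrt_nonneg _
  have he0 : 0 ≤ hsNorm (NormedSpace.exp ξ ∘L b ∘L NormedSpace.exp (-ξ)) :=
    Real.sqrt_nonneg _
  have hdiv : (r / Real.sqrt 2) ^ 2 = r ^ 2 / 2 := by
    rw [div_pow, Real.sq_sqrt (by norm_num : (0:ℝ) ≤ 2)]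
  have h1 : hsNorm b ^ 2 ≤ r ^ 2 / 2 := by
    rw [← hdiv]; exact pow_le_pow_left₀ hb0 hb 2
  have h2 : hsNorm (NormedSpace.exp ξ ∘L b ∘L NormedSpace.exp (-ξ)) ^ 2 ≤ r ^ 2 / 2 := by
    rw [← hdiv]; exact pow_le_pow_left₀ he0 he 2
  have h3 := part1 t ht
  nlinarith
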